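/- arXiv:2311.04379 — 2 statements merged into one kernel-verified Lean document; each statement's English description precedes it below -/
import Mathlib

section
/- Let k ≥ 537, N ≥ 1, 0 ≤ δ < 1, M = √(kN/(1-δ)), and q = ((1-δ)/N)·(1/2 + √2·π/√k + π²/k). Suppose p ∈ [0,1] and p̃ ∈ [0,1] satisfy |p̃ - p| ≤ 2π·√(p(1-p))/M + π²/M². If p ≤ (1-δ)/(2N), then p̃ < q. -/
open Real

/-!
With `c = (1 - δ) / N` one has `M ^ 2 = k / c`, and `q` is exactly the error bound's right end
`p + 2π√p / M + π² / M²` evaluated at `p = c / 2`. Since `p * (1 - p) = p - p ^ 2 ≤ p`, the actual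
bound at any `p ≤ c / 2` is no larger, and strictly smaller: either `p < c / 2`, or `p = c / 2 > 0`
and then `p * (1 - p) < p`.
-/

lemma add_mul_sqrt_mul_one_sub_lt {p a A : ℝ} (ha : 0 < a) (hA : 0 < A) (hp : p ≤ a) :
    p + A * √(p * (1 - p)) < a + A * √a := by
  rcases hp.lt_or_eq with hlt | rfl
  · have hvar : p * (1 - p) ≤ a := by nlinarith [sq_nonneg p]
    have := mul_le_mul_of_nonneg_left (Real.sqrt_le_sqrt hvar) hA.le
    linarith
  · have hvar : p * (1 - p) < p := by nlinarith [pow_pos ha 2]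
    have := mul_lt_mul_of_pos_left ((Real.sqrt_lt_sqrt_iff_of_pos ha).2 hvar) hA
    linarith

lemma two_mul_mul_sqrt_half_div_sqrt_div {x c k : ℝ} (hc : 0 < c) (hk : 0 < k) :
    2 * x / √(k / c) * √(c / 2) = √2 * x * c / √k := by
  have hc2 : √c ^ 2 = c := sq_sqrt hc.le
  have h22 : √2 ^ 2 = 2 := sq_sqrt zero_le_two
  have hc_sqrt : 0 < √c := Real.sqrt_pos.2 hc
  have hk_sqrt : 0 < √k := Real.sqrt_pos.2 hk
  rw [Real.sqrt_div hk.le, Real.sqrt_div hc.le]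
  field_simp
  linear_combination x * (2 * hc2 - c * h22)

lemma sq_div_sqrt_div_sq {x c k : ℝ} (hc : 0 < c) (hk : 0 < k) :
    x ^ 2 / √(k / c) ^ 2 = c * x ^ 2 / k := by
  rw [sq_sqrt (div_pos hk hc).le, div_div_eq_mul_div, mul_comm]

theorem stmt_1_general (k N δ M q p ptil : ℝ) (hk : 537 ≤ k) (hN : 1 ≤ N)
    (hδ1 : δ < 1)
    (hM : M = Real.sqrt (k * N / (1 - δ)))
    (hq : q = ((1 - δ) / N) * (1 / 2 + Real.sqrt 2 * π / Real.sqrt k + π ^ 2 / k))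
    (herr : |ptil - p| ≤ 2 * π * Real.sqrt (p * (1 - p)) / M + π ^ 2 / M ^ 2)
    (hple : p ≤ (1 - δ) / (2 * N)) :
    ptil < q := by
  set c := (1 - δ) / N with hc_def
  have hc : 0 < c := div_pos (by linarith) (by linarith)
  have hk0 : 0 < k := by linarith
  have hM' : M = √(k / c) := by rw [hM, div_div_eq_mul_div]
  have hq' : q = c / 2 + 2 * π / M * √(c / 2) + π ^ 2 / M ^ 2 := by
    rw [hq, hM', two_mul_mul_sqrt_half_div_sqrt_div hc hk0, sq_div_sqrt_div_sq hc hk0]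
    ring
  have hupper : ptil ≤ p + 2 * π / M * √(p * (1 - p)) + π ^ 2 / M ^ 2 := by
    have := (abs_le.1 herr).2
    rw [mul_div_right_comm] at this
    linarith
  have hM0 : 0 < M := by rw [hM']; exact Real.sqrt_pos.2 (div_pos hk0 hc)
  have hpc : p ≤ c / 2 := by rwa [hc_def, div_div, mul_comm N]
  have hkey := add_mul_sqrt_mul_one_sub_lt (half_pos hc) (by positivity : 0 < 2 * π / M) hpc
  linarith

theorem stmt_1 (k N δ M q p ptil : ℝ) (hk : 537 ≤ k) (hN : 1 ≤ N)
    (hδ0 : 0 ≤ δ) (hδ1 : δ < 1)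
    (hM : M = Real.sqrt (k * N / (1 - δ)))
    (hq : q = ((1 - δ) / N) * (1 / 2 + Real.sqrt 2 * π / Real.sqrt k + π ^ 2 / k))
    (hp : p ∈ Set.Icc (0 : ℝ) 1) (hptil : ptil ∈ Set.Icc (0 : ℝ) 1)
    (herr : |ptil - p| ≤ 2 * π * Real.sqrt (p * (1 - p)) / M + π ^ 2 / M ^ 2)
    (hple : p ≤ (1 - δ) / (2 * N)) :
    ptil < q :=
  stmt_1_general k N δ M q p ptil hk hN hδ1 hM hq herr hple
end

section
/- Let k ≥ 537, N ≥ 1, 0 ≤ δ < 1, M = √(kN/(1-δ)), and q = ((1-δ)/N)·(1/2 + √2·π/√k + π²/k). Suppose p ∈ [0,1] and p̃ ≥ 0 satisfy |p̃ - p| ≤ 2π·√(p(1-p))/M + π²/M². If p ≥ (1-δ)/N, then p̃ > q. -/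
/-!
Put `c = (1 - δ)/N` and `r = π/M = π √c/√k`. Bounding `√(p(1-p))` by `√p`, the error bound gives
`p̃ ≥ p - 2r√p - r²`. As a function of `√p` this is increasing once `√p ≥ r`, which holds from
`√p = √c` on because `π ≤ √k`; so `p̃ ≥ c - 2r√c - r² = c (1 - 2π/√k - π²/k)`, and for
`k ≥ 537` this exceeds `q = c (1/2 + √2 π/√k + π²/k)`.
-/

open Real

theorem sq_sub_two_mul_le_sq_sub_two_mul {r s t : ℝ} (hrt : r ≤ t) (hts : t ≤ s) :
    t ^ 2 - 2 * r * t ≤ s ^ 2 - 2 * r * s := by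
  nlinarith

theorem sub_le_of_abs_sub_le_amplitude_bound {a M p p' : ℝ} (ha : 0 ≤ a) (hM : 0 < M)
    (hp : p ∈ Set.Icc (0 : ℝ) 1)
    (h : |p' - p| ≤ 2 * a * √(p * (1 - p)) / M + a ^ 2 / M ^ 2) :
    p - 2 * (a / M) * √p - (a / M) ^ 2 ≤ p' := by
  have hvar : √(p * (1 - p)) ≤ √p := Real.sqrt_le_sqrt (by nlinarith [hp.1, hp.2])
  have hlin : 2 * a * √(p * (1 - p)) / M ≤ 2 * (a / M) * √p := by
    rw [mul_div_assoc', mul_div_right_comm]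
    gcongr
  have hlow := (abs_le.mp h).1
  rw [div_pow]
  linarith

theorem qae_threshold_lt {k : ℝ} (hk : 537 ≤ k) :
    1 / 2 + √2 * π / √k + π ^ 2 / k < 1 - 2 * π / √k - π ^ 2 / k := by
  have hu : (23.17 : ℝ) < √k := by
    rw [Real.lt_sqrt (by norm_num)]; linarith
  have hk' : √k ^ 2 = k := Real.sq_sqrt (by linarith)
  set u := √k
  rw [← hk', ← sub_pos]
  have hgap : (1 - 2 * π / u - π ^ 2 / u ^ 2) - (1 / 2 + √2 * π / u + π ^ 2 / u ^ 2)
      = (u ^ 2 - 2 * (2 + √2) * π * u - 4 * π ^ 2) / (2 * u ^ 2) := by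
    field_simp; ring
  rw [hgap]
  apply div_pos _ (by positivity)
  have hπ := Real.pi_lt_d6
  have h2 : √2 < 1.4142136 := (Real.sqrt_lt' (by norm_num)).mpr (by norm_num)
  have hcoef : (2 + √2) * π < 10.72649 := by nlinarith [Real.pi_pos, Real.sqrt_nonneg 2]
  nlinarith [Real.pi_pos, mul_lt_mul_of_pos_right hcoef (by linarith : (0 : ℝ) < u)]

theorem stmt_2_general (k N δ M q p ptil : ℝ) (hk : 537 ≤ k) (hN : 1 ≤ N)
    (hδ1 : δ < 1)
    (hM : M = Real.sqrt (k * N / (1 - δ)))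
    (hq : q = ((1 - δ) / N) * (1 / 2 + Real.sqrt 2 * π / Real.sqrt k + π ^ 2 / k))
    (hp : p ∈ Set.Icc (0 : ℝ) 1)
    (herr : |ptil - p| ≤ 2 * π * Real.sqrt (p * (1 - p)) / M + π ^ 2 / M ^ 2)
    (hpge : p ≥ (1 - δ) / N) :
    ptil > q := by
  set c := (1 - δ) / N
  have hc : 0 < c := div_pos (by linarith) (by linarith)
  have hk0 : 0 < k := by linarith
  have hMc : M = √k / √c := by
    have hδ : 1 - δ ≠ 0 := by linarith
    have hN0 : N ≠ 0 := by linarith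
    rw [hM, ← Real.sqrt_div hk0.le]
    congr 1
    simp only [c]
    field_simp
  have hM0 : 0 < M := by rw [hMc]; positivity
  have hr : π / M = π / √k * √c := by rw [hMc]; field_simp
  set r := π / M
  have hrc : r ≤ √c := by
    have hπk : π / √k ≤ 1 := by
      rw [div_le_one (by positivity), Real.le_sqrt pi_pos.le hk0.le]
      nlinarith [Real.pi_lt_four, Real.pi_pos]
    rw [hr]
    exact mul_le_of_le_one_left (Real.sqrt_nonneg c) hπk
  have hmono := sq_sub_two_mul_le_sq_sub_two_mul hrc (Real.sqrt_le_sqrt hpge)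
  rw [Real.sq_sqrt hc.le, Real.sq_sqrt hp.1] at hmono
  have hval : c - 2 * r * √c - r ^ 2 = c * (1 - 2 * π / √k - π ^ 2 / k) := by
    rw [hr, mul_pow, div_pow, Real.sq_sqrt hk0.le, Real.sq_sqrt hc.le]
    ring_nf
    rw [Real.sq_sqrt hc.le]
    ring
  calc q = c * (1 / 2 + √2 * π / √k + π ^ 2 / k) := hq
    _ < c * (1 - 2 * π / √k - π ^ 2 / k) := mul_lt_mul_of_pos_left (qae_threshold_lt hk) hc
    _ = c - 2 * r * √c - r ^ 2 := hval.symm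
    _ ≤ p - 2 * r * √p - r ^ 2 := by linarith
    _ ≤ ptil := sub_le_of_abs_sub_le_amplitude_bound Real.pi_pos.le hM0 hp herr

theorem stmt_2 (k N δ M q p ptil : ℝ) (hk : 537 ≤ k) (hN : 1 ≤ N)
    (hδ0 : 0 ≤ δ) (hδ1 : δ < 1)
    (hM : M = Real.sqrt (k * N / (1 - δ)))
    (hq : q = ((1 - δ) / N) * (1 / 2 + Real.sqrt 2 * π / Real.sqrt k + π ^ 2 / k))
    (hp : p ∈ Set.Icc (0 : ℝ) 1) (hptil : 0 ≤ ptil)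
    (herr : |ptil - p| ≤ 2 * π * Real.sqrt (p * (1 - p)) / M + π ^ 2 / M ^ 2)
    (hpge : p ≥ (1 - δ) / N) :
    ptil > q :=
  stmt_2_general k N δ M q p ptil hk hN hδ1 hM hq hp herr hpge
end
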